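/- arXiv:1602.07943 — 3 statements merged into one kernel-verified Lean document; each statement's English description precedes it below -/
import Mathlib

section
/- Let X_1,...,X_L, Y_1,...,Y_L be i.i.d. rate-1 exponential random variables, S_l = min{X_l,Y_l}, l_0 = argmax_l S_l, Z_1 = X_{l_0}, Z_2 = Y_{l_0}, U = min{Z_1,Z_2}, V = max{Z_1,Z_2}. Then the joint density of (U,V) is f_{U,V}(u,v) = 2L e^{-(u+v)}(1 - e^{-2u})^{L-1} for 0 ≤ u ≤ v and 0 otherwise. -/
/-!
Up to a null set of ties, `l₀ = l` exactly when `min (X l) (Y l)` exceeds the `L - 1` variables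
`min (X k) (Y k)`, `k ≠ l`, which are i.i.d. `Exp(2)` and independent of `(X l, Y l)`. Hence the
law of `(X l, Y l)` on `{l₀ = l}` has density `(1 - e^{-2 min(x, y)})^{L-1}` with respect to
`Exp(1) ⊗ Exp(1)`, whatever `l` is. This measure is symmetric and does not charge the diagonal,
so its image under `(x, y) ↦ (min, max)` is twice its restriction to `{x ≤ y}`; summing over the
`L` indices gives the factor `2L`.
-/

open MeasureTheory ProbabilityTheory Real Filter Topology

open Set

open scoped ENNReal

namespace MeasureTheory

variable {Ω : Type*} [MeasurableSpace Ω] {μ : Measure Ω}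

lemma measurable_select {ι β : Type*} [Countable ι] [MeasurableSpace ι]
    [MeasurableSingletonClass ι] [MeasurableSpace β] {W : ι → Ω → β} (hW : ∀ i, Measurable (W i))
    {l₀ : Ω → ι} (hl₀ : Measurable l₀) : Measurable fun ω ↦ W (l₀ ω) ω :=
  (measurable_from_prod_countable_right (f := fun p : ι × Ω ↦ W p.1 p.2) hW).comp
    (hl₀.prodMk measurable_id)

namespace Measure

lemma prod_diagonal_eq_zero {α : Type*} [MeasurableSpace α] [MeasurableEq α]
    (ρ ν : Measure α) [SFinite ν] [NullSingletonClass ν] : (ρ.prod ν) (diagonal α) = 0 := by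
  rw [prod_apply measurableSet_diagonal]
  have hsec : ∀ x : α, Prod.mk x ⁻¹' diagonal α = {x} := fun x ↦ Set.ext fun _ ↦ eq_comm
  simp [hsec]

lemma map_eq_sum_map_restrict_preimage {ι α : Type*} [Fintype ι] [MeasurableSpace ι]
    [MeasurableSingletonClass ι] [MeasurableSpace α] {W : Ω → α} {l₀ : Ω → ι}
    (hW : Measurable W) (hl₀ : Measurable l₀) :
    μ.map W = ∑ l, (μ.restrict (l₀ ⁻¹' {l})).map W := by
  ext C hC
  have hfib : ∀ l ∈ Finset.univ, MeasurableSet (l₀ ⁻¹' {l}) :=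
    fun l _ ↦ hl₀ (measurableSet_singleton l)
  rw [coe_finsetSum, Finset.sum_apply, map_apply hW hC]
  calc μ (W ⁻¹' C) = μ.restrict (W ⁻¹' C) (l₀ ⁻¹' ↑(Finset.univ : Finset ι)) := by simp
    _ = ∑ l, μ.restrict (W ⁻¹' C) (l₀ ⁻¹' {l}) :=
        (sum_measure_preimage_singleton _ hfib).symm
    _ = ∑ l, (μ.restrict (l₀ ⁻¹' {l})).map W C := by
        simp_rw [map_apply hW hC, restrict_apply (hW hC),
          restrict_apply (hfib _ (Finset.mem_univ _)), inter_comm]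

lemma map_swap_withDensity_of_symm {α : Type*} [MeasurableSpace α] {ρ : Measure (α × α)}
    (hρ : ρ.map Prod.swap = ρ) {f : α × α → ℝ≥0∞} (hf : Measurable f)
    (hsymm : ∀ p, f p.swap = f p) :
    (ρ.withDensity f).map Prod.swap = ρ.withDensity f := by
  ext C hC
  rw [map_apply measurable_swap hC, withDensity_apply _ (measurable_swap hC),
    withDensity_apply _ hC,
    ← (MeasurePreserving.mk measurable_swap hρ).setLIntegral_comp_preimage hC hf]
  simp_rw [hsymm]

lemma map_minMax_eq_two_smul_restrict {α : Type*} [LinearOrder α] [TopologicalSpace α]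
    [OrderClosedTopology α] [SecondCountableTopology α] [MeasurableSpace α]
    [OpensMeasurableSpace α] {ρ : Measure (α × α)}
    (hswap : ρ.map Prod.swap = ρ) (hdiag : ρ (diagonal α) = 0) :
    ρ.map (fun p ↦ (min p.1 p.2, max p.1 p.2)) = (2 : ℝ≥0∞) • ρ.restrict {p | p.1 ≤ p.2} := by
  have hg : Measurable fun p : α × α ↦ (min p.1 p.2, max p.1 p.2) := by fun_prop
  have hle : MeasurableSet {p : α × α | p.1 ≤ p.2} :=
    measurableSet_le measurable_fst measurable_snd
  ext C hC
  set s := (fun p : α × α ↦ (min p.1 p.2, max p.1 p.2)) ⁻¹' C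
  have hlow : s ∩ {p | p.1 ≤ p.2} = C ∩ {p | p.1 ≤ p.2} := by
    ext p
    simp only [s, mem_inter_iff, mem_preimage, mem_ofPred_eq, and_congr_left_iff]
    intro h
    rw [min_eq_left h, max_eq_right h]
  have hup : ρ (s \ {p | p.1 ≤ p.2}) = ρ (s ∩ {p | p.1 ≤ p.2}) := by
    have hswap_set : Prod.swap ⁻¹' (s \ {p | p.1 ≤ p.2}) = s ∩ {p | p.1 < p.2} := by
      ext p
      simp [s, min_comm, max_comm]
    rw [← hswap, map_apply measurable_swap ((hg hC).diff hle), hswap, hswap_set]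
    refine measure_congr (EventuallyEq.inter EventuallyEq.rfl ?_)
    filter_upwards [measure_eq_zero_iff_ae_notMem.mp hdiag] with p hp
    exact propext ⟨le_of_lt, fun h ↦ lt_of_le_of_ne h hp⟩
  rw [map_apply hg hC, smul_apply, restrict_apply hC, smul_eq_mul, two_mul,
    ← measure_inter_add_sdiff s hle, hup, hlow]

end Measure

end MeasureTheory

namespace ProbabilityTheory

instance nullSingletonClass_expMeasure (r : ℝ) : NullSingletonClass (expMeasure r) := by
  unfold expMeasure gammaMeasure
  infer_instance

lemma expMeasure_Iio {r : ℝ} (hr : 0 < r) (x : ℝ) :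
    expMeasure r (Iio x) = ENNReal.ofReal (if 0 ≤ x then 1 - exp (-(r * x)) else 0) := by
  have := isProbabilityMeasure_expMeasure hr
  rw [measure_congr Iio_ae_eq_Iic, ← ofReal_cdf, cdf_expMeasure_eq hr]

lemma exponentialPDF_mul_exponentialPDF_mul_expMeasure_Iio_pow {u v : ℝ} (hu : 0 ≤ u)
    (huv : u ≤ v) (n : ℕ) :
    exponentialPDF 1 u * exponentialPDF 1 v * expMeasure 2 (Iio (min u v)) ^ n =
      ENNReal.ofReal (exp (-(u + v)) * (1 - exp (-2 * u)) ^ n) := by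
  have hq : 0 ≤ 1 - exp (-(2 * u)) := sub_nonneg.mpr (exp_le_one_iff.mpr (by linarith))
  rw [min_eq_left huv, expMeasure_Iio two_pos, if_pos hu, exponentialPDF_of_nonneg hu,
    exponentialPDF_of_nonneg (hu.trans huv), ← ENNReal.ofReal_pow hq,
    ← ENNReal.ofReal_mul (by positivity), ← ENNReal.ofReal_mul (by positivity)]
  simp only [one_mul, neg_add, exp_add, neg_mul]

variable {Ω : Type*} [MeasurableSpace Ω] {μ : Measure Ω}

lemma one_sub_cdf_map [IsProbabilityMeasure μ] {X : Ω → ℝ} (hX : Measurable X) (x : ℝ) :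
    1 - cdf (μ.map X) x = μ.real {ω | x < X ω} := by
  have := Measure.isProbabilityMeasure_map (μ := μ) hX.aemeasurable
  rw [cdf_eq_real, map_measureReal_apply hX measurableSet_Iic,
    ← probReal_compl_eq_one_sub (hX measurableSet_Iic)]
  congr 1
  ext ω
  simp

lemma IndepFun.cdf_map_min [IsProbabilityMeasure μ] {X Y : Ω → ℝ} (hX : Measurable X)
    (hY : Measurable Y) (hXY : IndepFun X Y μ) (x : ℝ) :
    cdf (μ.map fun ω ↦ min (X ω) (Y ω)) x =
      1 - (1 - cdf (μ.map X) x) * (1 - cdf (μ.map Y) x) := by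
  rw [one_sub_cdf_map hX, one_sub_cdf_map hY, eq_sub_iff_add_eq, ← eq_sub_iff_add_eq',
    one_sub_cdf_map (hX.min hY)]
  simp only [measureReal_def, ← ENNReal.toReal_mul]
  have hset : {ω | x < min (X ω) (Y ω)} = X ⁻¹' Ioi x ∩ Y ⁻¹' Ioi x := by
    ext ω
    simp
  rw [hset, hXY.measure_inter_preimage_eq_mul _ _ measurableSet_Ioi measurableSet_Ioi]
  rfl

lemma IndepFun.map_min_expMeasure [IsProbabilityMeasure μ] {X Y : Ω → ℝ} (hX : Measurable X)
    (hY : Measurable Y) (hXY : IndepFun X Y μ) {r s : ℝ} (hr : 0 < r) (hs : 0 < s)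
    (hXlaw : μ.map X = expMeasure r) (hYlaw : μ.map Y = expMeasure s) :
    μ.map (fun ω ↦ min (X ω) (Y ω)) = expMeasure (r + s) := by
  have := Measure.isProbabilityMeasure_map (μ := μ) (hX.min hY).aemeasurable
  have := isProbabilityMeasure_expMeasure (add_pos hr hs)
  refine Measure.eq_of_cdf _ _ (StieltjesFunction.ext fun x ↦ ?_)
  rw [hXY.cdf_map_min hX hY, hXlaw, hYlaw, cdf_expMeasure_eq hr, cdf_expMeasure_eq hs,
    cdf_expMeasure_eq (add_pos hr hs)]
  split_ifs
  · rw [add_mul, neg_add, exp_add]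
    ring
  · ring

lemma IndepFun.measure_eq_eq_zero [IsFiniteMeasure μ] {α : Type*} [MeasurableSpace α]
    [MeasurableEq α] {X Y : Ω → α} (hX : Measurable X) (hY : Measurable Y)
    (hXY : IndepFun X Y μ) [NullSingletonClass (μ.map Y)] : μ {ω | X ω = Y ω} = 0 := by
  have hmap := (indepFun_iff_map_prod_eq_prod_map_map hX.aemeasurable hY.aemeasurable).mp hXY
  change μ ((fun ω ↦ (X ω, Y ω)) ⁻¹' diagonal α) = 0
  rw [← Measure.map_apply (hX.prodMk hY) measurableSet_diagonal, hmap]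
  exact Measure.prod_diagonal_eq_zero _ _

lemma iIndepFun.prodMk_of_sumElim {ι β : Type*} [Fintype ι] [MeasurableSpace β]
    {X Y : ι → Ω → β} (hX : ∀ i, Measurable (X i)) (hY : ∀ i, Measurable (Y i))
    (h : iIndepFun (Sum.elim X Y) μ) :
    iIndepFun (fun i ω ↦ (X i ω, Y i ω)) μ := by
  have := h.isProbabilityMeasure
  have hXY : ∀ i, Measurable (Sum.elim X Y i) := Sum.rec hX hY
  let e := (MeasurableEquiv.sumPiEquivProdPi fun _ : ι ⊕ ι ↦ β).trans
    (MeasurableEquiv.arrowProdEquivProdArrow β β ι).symm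
  have he : MeasurePreserving e (Measure.pi fun j ↦ μ.map (Sum.elim X Y j))
      (Measure.pi fun i ↦ (μ.map (X i)).prod (μ.map (Y i))) :=
    (measurePreserving_arrowProdEquivProdArrow β β ι _ _).symm.comp
      (measurePreserving_sumPiEquivProdPi _)
  have hpair : ∀ i, μ.map (fun ω ↦ (X i ω, Y i ω)) = (μ.map (X i)).prod (μ.map (Y i)) :=
    fun i ↦ (indepFun_iff_map_prod_eq_prod_map_map (hX i).aemeasurable (hY i).aemeasurable).mp
      (h.indepFun Sum.inl_ne_inr)
  rw [iIndepFun_iff_map_fun_eq_pi_map fun i ↦ ((hX i).prodMk (hY i)).aemeasurable]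
  calc μ.map (fun ω i ↦ (X i ω, Y i ω))
      = (μ.map fun ω j ↦ Sum.elim X Y j ω).map e :=
        (Measure.map_map e.measurable (measurable_pi_lambda _ hXY)).symm
    _ = Measure.pi fun i ↦ (μ.map (X i)).prod (μ.map (Y i)) := by
        rw [h.map_fun_eq_pi_map fun j ↦ (hXY j).aemeasurable, he.map_eq]
    _ = _ := by simp_rw [hpair]

lemma iIndepFun.indepFun_subtype_ne {ι β : Type*} [Fintype ι] [DecidableEq ι]
    [MeasurableSpace β] {f : ι → Ω → β} (hf : ∀ i, Measurable (f i)) (h : iIndepFun f μ)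
    (i : ι) : IndepFun (f i) (fun ω (j : {j // j ≠ i}) ↦ f j ω) μ := by
  let φ : (↥({i} : Finset ι) → β) → β := fun v ↦ v ⟨i, Finset.mem_singleton_self i⟩
  let ψ : (↥(Finset.univ.erase i) → β) → {j // j ≠ i} → β :=
    fun v j ↦ v ⟨j, Finset.mem_erase.mpr ⟨j.2, Finset.mem_univ _⟩⟩
  exact (h.indepFun_finset {i} (Finset.univ.erase i) (by simp) hf).comp (φ := φ) (ψ := ψ)
    (measurable_pi_apply _) (measurable_pi_lambda _ fun _ ↦ measurable_pi_apply _)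

lemma iIndepFun.map_setOf_forall_lt {ι : Type*} [Fintype ι] {T : ι → Ω → ℝ}
    (hT : ∀ i, Measurable (T i)) (h : iIndepFun T μ) (c : ℝ) :
    (μ.map fun ω i ↦ T i ω) {t | ∀ i, t i < c} = ∏ i, μ {ω | T i ω < c} := by
  have hset : {t : ι → ℝ | ∀ i, t i < c} = ⋂ i, (fun t ↦ t i) ⁻¹' Iio c := by
    ext t
    simp
  rw [hset, Measure.map_apply (measurable_pi_lambda _ hT)
    (MeasurableSet.iInter fun i ↦ measurable_pi_apply i measurableSet_Iio), preimage_iInter]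
  exact h.meas_iInter fun i ↦ ⟨Iio c, measurableSet_Iio, rfl⟩

lemma IndepFun.map_restrict_forall_lt [IsFiniteMeasure μ] {ι β : Type*} [Fintype ι]
    [MeasurableSpace β] {P : Ω → β} {T : ι → Ω → ℝ} {h : β → ℝ} (hP : Measurable P)
    (hT : ∀ i, Measurable (T i)) (hh : Measurable h) (hPT : IndepFun P (fun ω i ↦ T i ω) μ)
    (hTindep : iIndepFun T μ) :
    (μ.restrict {ω | ∀ i, T i ω < h (P ω)}).map P =
      (μ.map P).withDensity fun b ↦ ∏ i, μ {ω | T i ω < h b} := by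
  have hTm : Measurable fun ω i ↦ T i ω := measurable_pi_lambda _ hT
  ext B hB
  set D : Set (β × (ι → ℝ)) := Prod.fst ⁻¹' B ∩ ⋂ i, {q | q.2 i < h q.1}
  have hD : MeasurableSet D := (measurable_fst hB).inter <| MeasurableSet.iInter fun i ↦
    measurableSet_lt ((measurable_pi_apply i).comp measurable_snd) (hh.comp measurable_fst)
  have hsec : ∀ b, (μ.map fun ω i ↦ T i ω) (Prod.mk b ⁻¹' D) =
      B.indicator (fun b ↦ ∏ i, μ {ω | T i ω < h b}) b := by
    intro b
    by_cases hb : b ∈ B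
    · rw [indicator_of_mem hb, ← hTindep.map_setOf_forall_lt hT]
      congr 1
      ext t
      simp [D, hb]
    · rw [indicator_of_notMem hb, ← measure_empty (μ := μ.map fun ω i ↦ T i ω)]
      congr 1
      ext t
      simp [D, hb]
  rw [Measure.map_apply hP hB, Measure.restrict_apply (hP hB), withDensity_apply _ hB,
    ← lintegral_indicator hB]
  calc μ (P ⁻¹' B ∩ {ω | ∀ i, T i ω < h (P ω)})
      = (μ.map fun ω ↦ (P ω, fun i ↦ T i ω)) D := by
        rw [Measure.map_apply (hP.prodMk hTm) hD]
        congr 1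
        ext ω
        simp [D]
    _ = _ := by
        rw [(indepFun_iff_map_prod_eq_prod_map_map hP.aemeasurable hTm.aemeasurable).mp hPT,
          Measure.prod_apply hD]
        simp_rw [hsec]

lemma preimage_singleton_ae_eq_setOf_forall_lt {ι α : Type*} [Countable ι] [LinearOrder α]
    {S : ι → Ω → α} {l₀ : Ω → ι} (hl₀ : ∀ ω l, S l ω ≤ S (l₀ ω) ω)
    (hties : ∀ k l, k ≠ l → μ {ω | S k ω = S l ω} = 0) (l : ι) :
    l₀ ⁻¹' {l} =ᵐ[μ] {ω | ∀ k ≠ l, S k ω < S l ω} := by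
  have hne : ∀ᵐ ω ∂μ, ∀ k, k ≠ l → S k ω ≠ S l ω := by
    refine ae_all_iff.mpr fun k ↦ ?_
    by_cases hk : k = l
    · simp [hk]
    · filter_upwards [measure_eq_zero_iff_ae_notMem.mp (hties k l hk)] with ω hω
      exact fun _ ↦ hω
  filter_upwards [hne] with ω hω
  refine propext ⟨fun h k hk ↦ ?_, fun h ↦ ?_⟩
  · exact (h ▸ hl₀ ω k).lt_of_ne (hω k hk)
  · by_contra hl
    exact (h (l₀ ω) hl).not_ge (hl₀ ω l)

/-- The law of a pair of independent `Exp(1)` variables on the event that its minimum exceeds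
`n` further independent `Exp(2)` variables. -/
noncomputable def expPairWinningMeasure (n : ℕ) : Measure (ℝ × ℝ) :=
  ((expMeasure 1).prod (expMeasure 1)).withDensity fun p ↦ expMeasure 2 (Iio (min p.1 p.2)) ^ n

lemma measurable_expMeasure_Iio_min_pow (n : ℕ) :
    Measurable fun p : ℝ × ℝ ↦ expMeasure 2 (Iio (min p.1 p.2)) ^ n :=
  ((Monotone.measurable fun _ _ h ↦ measure_mono (Iio_subset_Iio h)).comp
    (measurable_fst.min measurable_snd)).pow_const n

lemma map_swap_expPairWinningMeasure (n : ℕ) :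
    (expPairWinningMeasure n).map Prod.swap = expPairWinningMeasure n := by
  have := isProbabilityMeasure_expMeasure one_pos
  exact Measure.map_swap_withDensity_of_symm Measure.prod_swap
    (measurable_expMeasure_Iio_min_pow n) fun p ↦ by rw [Prod.fst_swap, Prod.snd_swap, min_comm]

lemma expPairWinningMeasure_diagonal (n : ℕ) : expPairWinningMeasure n (diagonal ℝ) = 0 := by
  have := isProbabilityMeasure_expMeasure one_pos
  exact withDensity_absolutelyContinuous _ _ (Measure.prod_diagonal_eq_zero _ _)

lemma expPairWinningMeasure_eq_withDensity (n : ℕ) :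
    expPairWinningMeasure n = volume.withDensity fun p ↦
      exponentialPDF 1 p.1 * exponentialPDF 1 p.2 * expMeasure 2 (Iio (min p.1 p.2)) ^ n := by
  have hpdf : Measurable (exponentialPDF 1) := (measurable_exponentialPDFReal 1).ennreal_ofReal
  rw [expPairWinningMeasure, show expMeasure 1 = volume.withDensity (exponentialPDF 1) from rfl,
    prod_withDensity hpdf hpdf,
    ← withDensity_mul _ (by fun_prop) (measurable_expMeasure_Iio_min_pow n),
    Measure.volume_eq_prod]
  rfl

lemma natCast_smul_two_smul_restrict_expPairWinningMeasure (L : ℕ) :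
    (L : ℝ≥0∞) • (2 : ℝ≥0∞) • (expPairWinningMeasure (L - 1)).restrict {p | p.1 ≤ p.2} =
      volume.withDensity fun p ↦ ENNReal.ofReal
        (if 0 ≤ p.1 ∧ p.1 ≤ p.2 then
          2 * L * exp (-(p.1 + p.2)) * (1 - exp (-2 * p.1)) ^ (L - 1)
        else 0) := by
  have hpdf : Measurable (exponentialPDF 1) := (measurable_exponentialPDFReal 1).ennreal_ofReal
  have hle : MeasurableSet {p : ℝ × ℝ | p.1 ≤ p.2} :=
    measurableSet_le measurable_fst measurable_snd
  have hdens : Measurable fun p : ℝ × ℝ ↦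
      exponentialPDF 1 p.1 * exponentialPDF 1 p.2 * expMeasure 2 (Iio (min p.1 p.2)) ^ (L - 1) :=
    ((hpdf.comp measurable_fst).mul (hpdf.comp measurable_snd)).mul
      (measurable_expMeasure_Iio_min_pow _)
  rw [expPairWinningMeasure_eq_withDensity, restrict_withDensity hle,
    ← withDensity_indicator hle, ← withDensity_smul _ (hdens.indicator hle),
    ← withDensity_smul _ ((hdens.indicator hle).const_smul _)]
  congr 1
  funext p
  simp only [Pi.smul_apply, indicator, mem_ofPred_eq, smul_eq_mul]
  by_cases h12 : p.1 ≤ p.2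
  · by_cases h0 : 0 ≤ p.1
    · rw [if_pos h12, if_pos ⟨h0, h12⟩,
        exponentialPDF_mul_exponentialPDF_mul_expMeasure_Iio_pow h0 h12, ← ENNReal.ofReal_ofNat 2,
        ← ENNReal.ofReal_mul (by positivity), ← ENNReal.ofReal_natCast,
        ← ENNReal.ofReal_mul (by positivity)]
      congr 1
      ring
    · rw [if_pos h12, if_neg fun h ↦ h0 h.1, exponentialPDF_of_neg (not_le.mp h0)]
      simp
  · rw [if_neg h12, if_neg fun h ↦ h12 h.2]
    simp

section ExponentialPairs

variable {ι : Type*} {X Y : ι → Ω → ℝ}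

lemma iIndepFun.min_of_sumElim [Fintype ι] (hX : ∀ i, Measurable (X i))
    (hY : ∀ i, Measurable (Y i)) (hindep : iIndepFun (Sum.elim X Y) μ) :
    iIndepFun (fun i ω ↦ min (X i ω) (Y i ω)) μ :=
  (hindep.prodMk_of_sumElim hX hY).comp (fun _ p ↦ min p.1 p.2)
    fun _ ↦ measurable_fst.min measurable_snd

lemma map_min_eq_expMeasure_two (hX : ∀ i, Measurable (X i)) (hY : ∀ i, Measurable (Y i))
    (hindep : iIndepFun (Sum.elim X Y) μ) (hXlaw : ∀ i, μ.map (X i) = expMeasure 1)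
    (hYlaw : ∀ i, μ.map (Y i) = expMeasure 1) (i : ι) :
    μ.map (fun ω ↦ min (X i ω) (Y i ω)) = expMeasure 2 := by
  have := hindep.isProbabilityMeasure
  rw [(hindep.indepFun (i := .inl i) (j := .inr i) Sum.inl_ne_inr).map_min_expMeasure
    (hX i) (hY i) one_pos one_pos (hXlaw i) (hYlaw i)]
  norm_num

lemma measure_min_eq_min_eq_zero [Fintype ι] (hX : ∀ i, Measurable (X i))
    (hY : ∀ i, Measurable (Y i)) (hindep : iIndepFun (Sum.elim X Y) μ)
    (hXlaw : ∀ i, μ.map (X i) = expMeasure 1) (hYlaw : ∀ i, μ.map (Y i) = expMeasure 1)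
    {k l : ι} (hkl : k ≠ l) :
    μ {ω | min (X k ω) (Y k ω) = min (X l ω) (Y l ω)} = 0 := by
  have := hindep.isProbabilityMeasure
  have : NullSingletonClass (μ.map fun ω ↦ min (X l ω) (Y l ω)) := by
    rw [map_min_eq_expMeasure_two hX hY hindep hXlaw hYlaw l]
    infer_instance
  exact ((iIndepFun.min_of_sumElim hX hY hindep).indepFun hkl).measure_eq_eq_zero
    ((hX k).min (hY k)) ((hX l).min (hY l))

lemma map_restrict_forall_min_lt_eq_expPairWinningMeasure [Fintype ι] [DecidableEq ι]
    (hX : ∀ i, Measurable (X i)) (hY : ∀ i, Measurable (Y i))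
    (hindep : iIndepFun (Sum.elim X Y) μ) (hXlaw : ∀ i, μ.map (X i) = expMeasure 1)
    (hYlaw : ∀ i, μ.map (Y i) = expMeasure 1) (l : ι) :
    (μ.restrict {ω | ∀ k ≠ l, min (X k ω) (Y k ω) < min (X l ω) (Y l ω)}).map
      (fun ω ↦ (X l ω, Y l ω)) = expPairWinningMeasure (Fintype.card ι - 1) := by
  have := hindep.isProbabilityMeasure
  have hP : ∀ i, Measurable fun ω ↦ (X i ω, Y i ω) := fun i ↦ (hX i).prodMk (hY i)
  have hPT : IndepFun (fun ω ↦ (X l ω, Y l ω))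
      (fun ω (k : {k // k ≠ l}) ↦ min (X k ω) (Y k ω)) μ :=
    ((hindep.prodMk_of_sumElim hX hY).indepFun_subtype_ne hP l).comp (φ := id)
      (ψ := fun (v : {k // k ≠ l} → ℝ × ℝ) k ↦ min (v k).1 (v k).2) measurable_id
      (measurable_pi_lambda _ fun k ↦
        (measurable_pi_apply k).fst.min (measurable_pi_apply k).snd)
  have hlaw : ∀ (k : {k // k ≠ l}) t, μ {ω | min (X k ω) (Y k ω) < t} = expMeasure 2 (Iio t) :=
    fun k t ↦ by
      rw [← map_min_eq_expMeasure_two hX hY hindep hXlaw hYlaw k,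
        Measure.map_apply ((hX k).min (hY k)) measurableSet_Iio]
      rfl
  have hset : {ω | ∀ k ≠ l, min (X k ω) (Y k ω) < min (X l ω) (Y l ω)} =
      {ω | ∀ k : {k // k ≠ l}, min (X k ω) (Y k ω) < min (X l ω) (Y l ω)} := by
    ext ω
    simp
  rw [hset, hPT.map_restrict_forall_lt (T := fun (k : {k // k ≠ l}) ω ↦ min (X k ω) (Y k ω))
    (hP l) (fun k ↦ (hX k).min (hY k)) (measurable_fst.min measurable_snd)
    ((iIndepFun.min_of_sumElim hX hY hindep).precomp Subtype.val_injective),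
    (indepFun_iff_map_prod_eq_prod_map_map (hX l).aemeasurable (hY l).aemeasurable).mp
      (hindep.indepFun (i := .inl l) (j := .inr l) Sum.inl_ne_inr), hXlaw, hYlaw]
  simp only [hlaw, Finset.prod_const, Finset.card_univ, expPairWinningMeasure]
  simp

lemma map_restrict_preimage_singleton_eq_expPairWinningMeasure [Fintype ι] [DecidableEq ι]
    (hX : ∀ i, Measurable (X i)) (hY : ∀ i, Measurable (Y i))
    (hindep : iIndepFun (Sum.elim X Y) μ) (hXlaw : ∀ i, μ.map (X i) = expMeasure 1)
    (hYlaw : ∀ i, μ.map (Y i) = expMeasure 1) {l₀ : Ω → ι}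
    (hl₀ : ∀ ω l, min (X l ω) (Y l ω) ≤ min (X (l₀ ω) ω) (Y (l₀ ω) ω)) (l : ι) :
    (μ.restrict (l₀ ⁻¹' {l})).map (fun ω ↦ (X l ω, Y l ω)) =
      expPairWinningMeasure (Fintype.card ι - 1) := by
  rw [Measure.restrict_congr_set (preimage_singleton_ae_eq_setOf_forall_lt hl₀
      (fun k l hkl ↦ measure_min_eq_min_eq_zero hX hY hindep hXlaw hYlaw hkl) l),
    map_restrict_forall_min_lt_eq_expPairWinningMeasure hX hY hindep hXlaw hYlaw l]

end ExponentialPairs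

end ProbabilityTheory

theorem joint_density_min_max_of_selected_relay_gains_general
    {Ω : Type*} [MeasurableSpace Ω] (μ : Measure Ω)
    (L : ℕ) (X Y : Fin L → Ω → ℝ)
    (hX : ∀ l, Measurable (X l)) (hY : ∀ l, Measurable (Y l))
    (hindep : iIndepFun (Sum.elim X Y) μ)
    (hXlaw : ∀ l, μ.map (X l) = expMeasure 1)
    (hYlaw : ∀ l, μ.map (Y l) = expMeasure 1)
    (S : Fin L → Ω → ℝ) (hSdef : ∀ l ω, S l ω = min (X l ω) (Y l ω))
    (l₀ : Ω → Fin L) (hl₀meas : Measurable l₀)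
    (hl₀ : ∀ ω l, S l ω ≤ S (l₀ ω) ω)
    (Z₁ Z₂ : Ω → ℝ) (hZ₁ : ∀ ω, Z₁ ω = X (l₀ ω) ω) (hZ₂ : ∀ ω, Z₂ ω = Y (l₀ ω) ω) :
    μ.map (fun ω => (min (Z₁ ω) (Z₂ ω), max (Z₁ ω) (Z₂ ω))) =
      (volume : Measure (ℝ × ℝ)).withDensity
        (fun p => ENNReal.ofReal
          (if 0 ≤ p.1 ∧ p.1 ≤ p.2 then
            2 * L * Real.exp (-(p.1 + p.2)) * (1 - Real.exp (-2 * p.1)) ^ (L - 1)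
          else 0)) := by
  simp only [hSdef] at hl₀
  set g : ℝ × ℝ → ℝ × ℝ := fun p ↦ (min p.1 p.2, max p.1 p.2)
  have hg : Measurable g := by fun_prop
  have hW : (fun ω ↦ (min (Z₁ ω) (Z₂ ω), max (Z₁ ω) (Z₂ ω))) =
      fun ω ↦ g (X (l₀ ω) ω, Y (l₀ ω) ω) := funext fun ω ↦ by rw [hZ₁, hZ₂]
  have hpiece : ∀ l, (μ.restrict (l₀ ⁻¹' {l})).map (fun ω ↦ g (X (l₀ ω) ω, Y (l₀ ω) ω)) =
      (expPairWinningMeasure (L - 1)).map g := fun l ↦ by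
    rw [Measure.map_congr (g := g ∘ fun ω ↦ (X l ω, Y l ω)) <|
        ae_restrict_of_forall_mem (hl₀meas (measurableSet_singleton l))
          fun ω (hω : l₀ ω = l) ↦ by rw [hω]; rfl,
      ← Measure.map_map hg ((hX l).prodMk (hY l)),
      map_restrict_preimage_singleton_eq_expPairWinningMeasure hX hY hindep hXlaw hYlaw hl₀ l,
      Fintype.card_fin]
  rw [hW]
  calc μ.map (fun ω ↦ g (X (l₀ ω) ω, Y (l₀ ω) ω))
      = ∑ l, (μ.restrict (l₀ ⁻¹' {l})).map (fun ω ↦ g (X (l₀ ω) ω, Y (l₀ ω) ω)) :=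
        Measure.map_eq_sum_map_restrict_preimage
          (hg.comp ((measurable_select hX hl₀meas).prodMk (measurable_select hY hl₀meas)))
          hl₀meas
    _ = ∑ _l : Fin L, (expPairWinningMeasure (L - 1)).map g :=
        Finset.sum_congr rfl fun l _ ↦ hpiece l
    _ = (L : ℝ≥0∞) • (2 : ℝ≥0∞) • (expPairWinningMeasure (L - 1)).restrict {p | p.1 ≤ p.2} := by
        rw [Finset.sum_const, Finset.card_univ, Fintype.card_fin, Nat.cast_smul_eq_nsmul,
          Measure.map_minMax_eq_two_smul_restrict (map_swap_expPairWinningMeasure _)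
            (expPairWinningMeasure_diagonal _)]
    _ = _ := natCast_smul_two_smul_restrict_expPairWinningMeasure L

/-- Let `X_1, …, X_L, Y_1, …, Y_L` be i.i.d. rate-1 exponential random variables,
`S_l = min {X_l, Y_l}`, `l₀ = argmax_l S_l`, `Z₁ = X_{l₀}`, `Z₂ = Y_{l₀}`,
`U = min {Z₁, Z₂}`, `V = max {Z₁, Z₂}`. Then the joint density of `(U, V)` is
`f_{U,V}(u,v) = 2 L e^{-(u+v)} (1 - e^{-2u})^{L-1}` for `0 ≤ u ≤ v` and `0` otherwise. -/
theorem joint_density_min_max_of_selected_relay_gains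
    {Ω : Type*} [MeasurableSpace Ω] (μ : Measure Ω) [IsProbabilityMeasure μ]
    (L : ℕ) (hL : 0 < L) (X Y : Fin L → Ω → ℝ)
    (hX : ∀ l, Measurable (X l)) (hY : ∀ l, Measurable (Y l))
    (hindep : iIndepFun (Sum.elim X Y) μ)
    (hXlaw : ∀ l, μ.map (X l) = expMeasure 1)
    (hYlaw : ∀ l, μ.map (Y l) = expMeasure 1)
    (S : Fin L → Ω → ℝ) (hSdef : ∀ l ω, S l ω = min (X l ω) (Y l ω))
    (l₀ : Ω → Fin L) (hl₀meas : Measurable l₀)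
    (hl₀ : ∀ ω l, S l ω ≤ S (l₀ ω) ω)
    (Z₁ Z₂ : Ω → ℝ) (hZ₁ : ∀ ω, Z₁ ω = X (l₀ ω) ω) (hZ₂ : ∀ ω, Z₂ ω = Y (l₀ ω) ω) :
    μ.map (fun ω => (min (Z₁ ω) (Z₂ ω), max (Z₁ ω) (Z₂ ω))) =
      (volume : Measure (ℝ × ℝ)).withDensity
        (fun p => ENNReal.ofReal
          (if 0 ≤ p.1 ∧ p.1 ≤ p.2 then
            2 * L * Real.exp (-(p.1 + p.2)) * (1 - Real.exp (-2 * p.1)) ^ (L - 1)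
          else 0)) :=
  joint_density_min_max_of_selected_relay_gains_general μ L X Y hX hY hindep hXlaw hYlaw S hSdef l₀
    hl₀meas hl₀ Z₁ Z₂ hZ₁ hZ₂
end

section
/- Let X_1,...,X_L, Y_1,...,Y_L be i.i.d. rate-1 exponentials, S_l = min{X_l,Y_l}, l_0 = argmax_l S_l, Z_1 = X_{l_0}, Z_2 = Y_{l_0}. Then the joint density of (Z_1, Z_2) equals L e^{-(z_1+z_2)}(1 - e^{-2 min{z_1,z_2}})^{L-1} for z_1, z_2 ≥ 0 and 0 otherwise. -/
open MeasureTheory ProbabilityTheory Real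
open scoped ENNReal

/-!
The pairs `W l = (X l, Y l)` are i.i.d. with law `ν = Exp(1) ⊗ Exp(1)`. The event
`{l₀ = l, W l ∈ A}` lies between the events "`min (W l)` strictly, resp. weakly, exceeds every
other `min (W k)`, and `W l ∈ A`". By independence both have probability
`∫_A ν{min ≤ min z}^(L-1) dν(z)`, since `min` has no atoms under `ν`. Summing over `l` gives the
density `L F(min z)^(L-1)` with respect to `ν`, where `F(c) = ν{min ≤ c} = 1 - e^{-2c}`; multiplying
by the density `e^{-(z₁+z₂)}` of `ν` gives the formula.
-/

section Pi

variable {ι α : Type*} [Fintype ι] [DecidableEq ι] [MeasurableSpace α]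

theorem measurePreserving_eval_prod_pi_ne (ν : Measure α) [SigmaFinite ν] (l : ι) :
    MeasurePreserving (fun g : ι → α => (g l, fun k : {k // k ≠ l} => g k))
      (Measure.pi fun _ => ν) (ν.prod (Measure.pi fun _ => ν)) := by
  have h := measurePreserving_piEquivPiSubtypeProd (fun _ : ι => ν) (· = l)
  rw [Subsingleton.elim (Subtype.fintype _) (Fintype.subtypeEq l)] at h
  exact ((measurePreserving_piUnique (fun _ : {k // k = l} => ν)).prod
    (MeasurePreserving.id (Measure.pi fun _ : {k // k ≠ l} => ν))).comp h

theorem measure_pi_setOf_forall_ne_mem (ν : Measure α) [SigmaFinite ν] (l : ι)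
    {A : Set α} (hA : MeasurableSet A) {B : Set (α × α)} (hB : MeasurableSet B) :
    Measure.pi (fun _ : ι => ν) {g | g l ∈ A ∧ ∀ k ≠ l, (g l, g k) ∈ B}
      = ∫⁻ z in A, ν (Prod.mk z ⁻¹' B) ^ (Fintype.card ι - 1) ∂ν := by
  set T : Set (α × ({k // k ≠ l} → α)) := {p | p.1 ∈ A ∧ ∀ k, (p.1, p.2 k) ∈ B}
  have hT : MeasurableSet T := by measurability
  have hcard : Fintype.card {k // k ≠ l} = Fintype.card ι - 1 := by
    simp [Fintype.card_subtype_compl]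
  calc Measure.pi (fun _ : ι => ν) {g | g l ∈ A ∧ ∀ k ≠ l, (g l, g k) ∈ B}
      = ν.prod (Measure.pi fun _ => ν) T := by
        rw [← (measurePreserving_eval_prod_pi_ne ν l).measure_preimage hT.nullMeasurableSet]
        congr with g
        simp [T]
    _ = ∫⁻ z, A.indicator (fun z => ν (Prod.mk z ⁻¹' B) ^ (Fintype.card ι - 1)) z ∂ν := by
        rw [Measure.prod_apply hT]
        refine lintegral_congr fun z => ?_
        by_cases hz : z ∈ A
        · have : Prod.mk z ⁻¹' T = Set.univ.pi fun _ => Prod.mk z ⁻¹' B := by ext; simp [T, hz]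
          simp [this, hz, Measure.pi_pi, hcard]
        · have : Prod.mk z ⁻¹' T = ∅ := by ext; simp [T, hz]
          simp [this, hz]
    _ = _ := lintegral_indicator hA _

end Pi

theorem measure_setOf_le_eq_measure_setOf_lt {α : Type*} [MeasurableSpace α] {ν : Measure α}
    {f : α → ℝ} {c : ℝ} (hatom : ν {x | f x = c} = 0) : ν {x | f x ≤ c} = ν {x | f x < c} := by
  refine le_antisymm ?_ (measure_mono fun x (hx : f x < c) => hx.le)
  calc ν {x | f x ≤ c} ≤ ν ({x | f x < c} ∪ {x | f x = c}) :=
        measure_mono fun x (hx : f x ≤ c) => hx.lt_or_eq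
    _ ≤ ν {x | f x < c} := by
        rw [← add_zero (ν {x | f x < c}), ← hatom]; exact measure_union_le _ _

theorem Measurable.measure_setOf_le {α : Type*} [MeasurableSpace α] {ν : Measure α} [SFinite ν]
    {f : α → ℝ} (hf : Measurable f) : Measurable fun z => ν {x | f x ≤ f z} :=
  measurable_measure_prodMk_left <|
    measurableSet_le (hf.comp measurable_snd) (hf.comp measurable_fst)

section Selection

variable {Ω ι α : Type*} [MeasurableSpace Ω] [MeasurableSpace α] [Fintype ι] [DecidableEq ι]
  {μ : Measure Ω} {ν : Measure α} [SigmaFinite ν]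
  {W : Ω → ι → α} {f : α → ℝ} {sel : Ω → ι}

theorem measure_setOf_sel_eq_and_mem (hW : Measurable W)
    (hlaw : μ.map W = Measure.pi fun _ => ν) (hf : Measurable f) (hatom : ∀ c, ν {x | f x = c} = 0)
    (hmax : ∀ ω k, f (W ω k) ≤ f (W ω (sel ω))) (l : ι) {A : Set α} (hA : MeasurableSet A) :
    μ {ω | sel ω = l ∧ W ω l ∈ A}
      = ∫⁻ z in A, ν {x | f x ≤ f z} ^ (Fintype.card ι - 1) ∂ν := by
  have hpi (B : Set (α × α)) (hB : MeasurableSet B) :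
      μ (W ⁻¹' {g | g l ∈ A ∧ ∀ k ≠ l, (g l, g k) ∈ B})
        = ∫⁻ z in A, ν (Prod.mk z ⁻¹' B) ^ (Fintype.card ι - 1) ∂ν := by
    rw [← measure_pi_setOf_forall_ne_mem ν l hA hB, ← hlaw,
      Measure.map_apply hW (by measurability)]
  have hf₁ : Measurable fun p : α × α => f p.1 := hf.comp measurable_fst
  have hf₂ : Measurable fun p : α × α => f p.2 := hf.comp measurable_snd
  -- `l` is selected whenever it is the strict maximiser, and only if it is a weak one.
  refine le_antisymm ?_ ?_
  · calc μ {ω | sel ω = l ∧ W ω l ∈ A}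
        ≤ μ (W ⁻¹' {g | g l ∈ A ∧ ∀ k ≠ l, (g l, g k) ∈ {p : α × α | f p.2 ≤ f p.1}}) :=
          measure_mono fun ω ⟨hl, hA⟩ => ⟨hA, fun k _ => hl ▸ hmax ω k⟩
      _ = _ := hpi _ (measurableSet_le hf₂ hf₁)
  · calc ∫⁻ z in A, ν {x | f x ≤ f z} ^ (Fintype.card ι - 1) ∂ν
        = μ (W ⁻¹' {g | g l ∈ A ∧ ∀ k ≠ l, (g l, g k) ∈ {p : α × α | f p.2 < f p.1}}) := by
          simp_rw [hpi _ (measurableSet_lt hf₂ hf₁),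
            measure_setOf_le_eq_measure_setOf_lt (hatom _)]
          rfl
      _ ≤ μ {ω | sel ω = l ∧ W ω l ∈ A} := by
          refine measure_mono fun ω ⟨hA, hlt⟩ => ⟨?_, hA⟩
          by_contra hne
          exact (hlt (sel ω) hne).not_ge (hmax ω l)

theorem map_eval_sel_eq_withDensity [MeasurableSpace ι] [MeasurableSingletonClass ι]
    (hW : Measurable W) (hlaw : μ.map W = Measure.pi fun _ => ν)
    (hf : Measurable f) (hatom : ∀ c, ν {x | f x = c} = 0)
    (hsel : Measurable sel) (hmax : ∀ ω k, f (W ω k) ≤ f (W ω (sel ω))) :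
    μ.map (fun ω => W ω (sel ω))
      = ν.withDensity fun z => Fintype.card ι * ν {x | f x ≤ f z} ^ (Fintype.card ι - 1) := by
  have hWsel : Measurable fun ω => W ω (sel ω) :=
    (measurable_from_prod_countable_left (f := fun p : Ω × ι => W p.1 p.2)
      fun l => (measurable_pi_apply l).comp hW).comp (measurable_id.prodMk hsel)
  ext A hA
  have hsplit : (fun ω => W ω (sel ω)) ⁻¹' A = ⋃ l, {ω | sel ω = l ∧ W ω l ∈ A} := by
    ext ω; simp
  rw [Measure.map_apply hWsel hA, withDensity_apply _ hA,
    lintegral_const_mul _ (hf.measure_setOf_le.pow_const _), hsplit, measure_iUnion _ _]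
  · simp [measure_setOf_sel_eq_and_mem hW hlaw hf hatom hmax _ hA]
  · intro i j hij
    exact Set.disjoint_left.mpr fun ω hi hj => hij (hi.1.symm.trans hj.1)
  · exact fun l => (hsel (measurableSet_singleton l)).inter ((measurable_pi_apply l).comp hW hA)

end Selection

theorem ProbabilityTheory.iIndepFun.map_pairs_eq_pi {Ω ι β : Type*} [MeasurableSpace Ω]
    [MeasurableSpace β] [Fintype ι] {μ : Measure Ω}
    {X Y : ι → Ω → β} (hX : ∀ l, Measurable (X l)) (hY : ∀ l, Measurable (Y l))
    (hindep : iIndepFun (Sum.elim X Y) μ) :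
    μ.map (fun ω l => (X l ω, Y l ω)) = Measure.pi fun l => (μ.map (X l)).prod (μ.map (Y l)) := by
  have := hindep.isProbabilityMeasure
  have hXY : ∀ i, Measurable (Sum.elim X Y i) := Sum.rec hX hY
  have hpair := (measurePreserving_arrowProdEquivProdArrow β β ι
    (fun l => μ.map (X l)) (fun l => μ.map (Y l))).symm.comp
    (measurePreserving_sumPiEquivProdPi fun i => μ.map (Sum.elim X Y i))
  rw [← hpair.map_eq, ← hindep.map_fun_eq_pi_map fun i => (hXY i).aemeasurable,
    Measure.map_map hpair.measurable (measurable_pi_lambda _ hXY)]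
  rfl

theorem MeasureTheory.Measure.prod_setOf_min_eq_null {μ ν : Measure ℝ} [SFinite ν]
    [NullSingletonClass μ] [NullSingletonClass ν] (c : ℝ) : μ.prod ν {w | min w.1 w.2 = c} = 0 := by
  refine measure_mono_null (t := {c} ×ˢ Set.univ ∪ Set.univ ×ˢ {c}) (fun w hw => ?_) ?_
  · rcases min_choice w.1 w.2 with h | h <;> simp_all
  · simp [Measure.prod_prod]

namespace ProbabilityTheory

variable {r : ℝ}

instance : NullSingletonClass (expMeasure r) :=
  inferInstanceAs (NullSingletonClass (volume.withDensity _))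

theorem expMeasure_Ioi (hr : 0 < r) {c : ℝ} (hc : 0 ≤ c) :
    expMeasure r (Set.Ioi c) = ENNReal.ofReal (exp (-(r * c))) := by
  have := isProbabilityMeasure_expMeasure hr
  have hexp : exp (-(r * c)) ≤ 1 := exp_le_one_iff.mpr (neg_nonpos.mpr (mul_nonneg hr.le hc))
  rw [← Set.compl_Iic, prob_compl_eq_one_sub measurableSet_Iic, ← ofReal_cdf,
    cdf_expMeasure_eq hr, if_pos hc, ← ENNReal.ofReal_one, ← ENNReal.ofReal_sub _ (by linarith),
    sub_sub_cancel]

theorem expMeasure_prod_setOf_min_le (hr : 0 < r) {c : ℝ} (hc : 0 ≤ c) :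
    (expMeasure r).prod (expMeasure r) {w | min w.1 w.2 ≤ c}
      = ENNReal.ofReal (1 - exp (-(2 * r * c))) := by
  have := isProbabilityMeasure_expMeasure hr
  have hset : {w : ℝ × ℝ | min w.1 w.2 ≤ c} = (Set.Ioi c ×ˢ Set.Ioi c)ᶜ := by
    ext w; simp [or_iff_not_imp_left]
  rw [hset, prob_compl_eq_one_sub (measurableSet_Ioi.prod measurableSet_Ioi), Measure.prod_prod,
    expMeasure_Ioi hr hc, ← ENNReal.ofReal_mul (exp_nonneg _), ← exp_add, ← ENNReal.ofReal_one,
    ← ENNReal.ofReal_sub _ (exp_nonneg _)]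
  ring_nf

theorem expMeasure_prod_withDensity {g : ℝ × ℝ → ℝ≥0∞} (hg : Measurable g) :
    ((expMeasure r).prod (expMeasure r)).withDensity g
      = volume.withDensity fun z => exponentialPDF r z.1 * exponentialPDF r z.2 * g z := by
  have hpdf : Measurable (exponentialPDF r) := (measurable_exponentialPDFReal r).ennreal_ofReal
  rw [← Pi.mul_def, withDensity_mul _ (f := fun z => exponentialPDF r z.1 * exponentialPDF r z.2)
      ((hpdf.comp measurable_fst).mul (hpdf.comp measurable_snd)) hg,
    Measure.volume_eq_prod, ← prod_withDensity hpdf hpdf]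
  rfl

end ProbabilityTheory

theorem exponentialPDF_mul_exponentialPDF_mul_cdf_min_pow (n k : ℕ) (z : ℝ × ℝ) :
    exponentialPDF 1 z.1 * exponentialPDF 1 z.2 *
        (n * (expMeasure 1).prod (expMeasure 1) {w | min w.1 w.2 ≤ min z.1 z.2} ^ k)
      = ENNReal.ofReal (if 0 ≤ z.1 ∧ 0 ≤ z.2 then
          n * exp (-(z.1 + z.2)) * (1 - exp (-2 * min z.1 z.2)) ^ k else 0) := by
  by_cases hz : 0 ≤ z.1 ∧ 0 ≤ z.2
  · obtain ⟨h₁, h₂⟩ := hz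
    have hcdf : 0 ≤ 1 - exp (-(2 * min z.1 z.2)) :=
      sub_nonneg.mpr (exp_le_one_iff.mpr (neg_nonpos.mpr (by positivity)))
    rw [if_pos ⟨h₁, h₂⟩, exponentialPDF_of_nonneg h₁, exponentialPDF_of_nonneg h₂,
      expMeasure_prod_setOf_min_le one_pos (le_min h₁ h₂)]
    simp only [one_mul, mul_one, neg_mul]
    rw [ENNReal.ofReal_mul (by positivity), ENNReal.ofReal_mul (by positivity),
      ENNReal.ofReal_pow hcdf, ENNReal.ofReal_natCast, neg_add, exp_add,
      ENNReal.ofReal_mul (exp_nonneg _)]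
    ring
  · rw [if_neg hz, ENNReal.ofReal_zero]
    rcases not_and_or.mp hz with h | h <;> simp [exponentialPDF_of_neg (not_le.mp h)]

theorem joint_density_selected_relay_gains_general
    {Ω : Type*} [MeasurableSpace Ω] (μ : Measure Ω)
    (L : ℕ) (X Y : Fin L → Ω → ℝ)
    (hX : ∀ l, Measurable (X l)) (hY : ∀ l, Measurable (Y l))
    (hindep : iIndepFun (Sum.elim X Y) μ)
    (hXlaw : ∀ l, μ.map (X l) = expMeasure 1)
    (hYlaw : ∀ l, μ.map (Y l) = expMeasure 1)
    (S : Fin L → Ω → ℝ) (hSdef : ∀ l ω, S l ω = min (X l ω) (Y l ω))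
    (l₀ : Ω → Fin L) (hl₀meas : Measurable l₀)
    (hl₀ : ∀ ω l, S l ω ≤ S (l₀ ω) ω)
    (Z₁ Z₂ : Ω → ℝ) (hZ₁ : ∀ ω, Z₁ ω = X (l₀ ω) ω) (hZ₂ : ∀ ω, Z₂ ω = Y (l₀ ω) ω) :
    μ.map (fun ω => (Z₁ ω, Z₂ ω)) =
      (volume : Measure (ℝ × ℝ)).withDensity
        (fun z => ENNReal.ofReal
          (if 0 ≤ z.1 ∧ 0 ≤ z.2 then
            L * Real.exp (-(z.1 + z.2)) * (1 - Real.exp (-2 * min z.1 z.2)) ^ (L - 1)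
          else 0)) := by
  have := isProbabilityMeasure_expMeasure one_pos
  have hlaw : μ.map (fun ω l => (X l ω, Y l ω))
      = Measure.pi fun _ => (expMeasure 1).prod (expMeasure 1) := by
    simp only [hindep.map_pairs_eq_pi hX hY, hXlaw, hYlaw]
  have hZ : (fun ω => (Z₁ ω, Z₂ ω)) = fun ω => (X (l₀ ω) ω, Y (l₀ ω) ω) := by
    ext ω <;> simp [hZ₁, hZ₂]
  rw [hZ]
  refine (map_eval_sel_eq_withDensity (measurable_pi_lambda _ fun l => (hX l).prodMk (hY l))
    hlaw (measurable_fst.min measurable_snd) (Measure.prod_setOf_min_eq_null ·) hl₀meas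
    fun ω k => by simpa only [hSdef] using hl₀ ω k).trans ?_
  rw [expMeasure_prod_withDensity
    (((measurable_fst.min measurable_snd).measure_setOf_le.pow_const _).const_mul _)]
  simp only [Fintype.card_fin]
  congr with z
  exact exponentialPDF_mul_exponentialPDF_mul_cdf_min_pow L (L - 1) z

/-- Let `X_1, …, X_L, Y_1, …, Y_L` be i.i.d. rate-1 exponential random variables,
`S_l = min {X_l, Y_l}`, `l₀ = argmax_l S_l`, `Z₁ = X_{l₀}`, `Z₂ = Y_{l₀}`.
Then the joint density of `(Z₁, Z₂)` is
`L e^{-(z₁+z₂)} (1 - e^{-2 min{z₁,z₂}})^{L-1}` for `z₁, z₂ ≥ 0` and `0` otherwise. -/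
theorem joint_density_selected_relay_gains
    {Ω : Type*} [MeasurableSpace Ω] (μ : Measure Ω) [IsProbabilityMeasure μ]
    (L : ℕ) (hL : 0 < L) (X Y : Fin L → Ω → ℝ)
    (hX : ∀ l, Measurable (X l)) (hY : ∀ l, Measurable (Y l))
    (hindep : iIndepFun (Sum.elim X Y) μ)
    (hXlaw : ∀ l, μ.map (X l) = expMeasure 1)
    (hYlaw : ∀ l, μ.map (Y l) = expMeasure 1)
    (S : Fin L → Ω → ℝ) (hSdef : ∀ l ω, S l ω = min (X l ω) (Y l ω))
    (l₀ : Ω → Fin L) (hl₀meas : Measurable l₀)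
    (hl₀ : ∀ ω l, S l ω ≤ S (l₀ ω) ω)
    (Z₁ Z₂ : Ω → ℝ) (hZ₁ : ∀ ω, Z₁ ω = X (l₀ ω) ω) (hZ₂ : ∀ ω, Z₂ ω = Y (l₀ ω) ω) :
    μ.map (fun ω => (Z₁ ω, Z₂ ω)) =
      (volume : Measure (ℝ × ℝ)).withDensity
        (fun z => ENNReal.ofReal
          (if 0 ≤ z.1 ∧ 0 ≤ z.2 then
            L * Real.exp (-(z.1 + z.2)) * (1 - Real.exp (-2 * min z.1 z.2)) ^ (L - 1)
          else 0)) :=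
  joint_density_selected_relay_gains_general μ L X Y hX hY hindep hXlaw hYlaw S hSdef l₀ hl₀meas hl₀
    Z₁ Z₂ hZ₁ hZ₂
end

section
/- The function g(z₁, z₂) = L e^{-(z₁+z₂)}(1 - e^{-2 min{z₁,z₂}})^{L-1} on [0,∞)² (extended by 0 elsewhere) is a probability density function: it is nonnegative and integrates to 1 over ℝ². -/
open MeasureTheory ProbabilityTheory Real Filter Topology

/-!
The density is `e^{-(x+y)} h(min x y)` on the quadrant, with `h t = L (1 - e^{-2t})^{L-1}`.
Such a density is symmetric and the diagonal is null, so its integral is twice the integral over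
`{x ≤ y}`; there `min x y = x`, and integrating `y` out first leaves `∫₀^∞ e^{-2t} h t dt`.
Finally `2 e^{-2t} h t` is the derivative of `(1 - e^{-2t})^L`, the distribution function of the
maximum of `L` independent `Exp(2)` variables, which increases from `0` to `1`.
-/

open Set

theorem MeasureTheory.Measure.prod_diagonal_eq_zero_s10 {α : Type*} [MeasurableSpace α]
    [MeasurableEq α] (μ ν : Measure α) [SFinite ν] [NullSingletonClass ν] :
    μ.prod ν (diagonal α) = 0 := by
  rw [Measure.measure_prod_null measurableSet_diagonal]
  refine Eventually.of_forall fun x => ?_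
  simp [preimage, diagonal]

lemma Real.one_sub_exp_mem_Icc {x : ℝ} (hx : x ≤ 0) : 1 - exp x ∈ Icc (0 : ℝ) 1 :=
  ⟨sub_nonneg.2 (exp_le_one_iff.2 hx), sub_le_self _ (exp_nonneg x)⟩

lemma hasDerivAt_one_sub_exp_pow (c : ℝ) (n : ℕ) (t : ℝ) :
    HasDerivAt (fun t => (1 - exp (-c * t)) ^ n)
      (n * c * exp (-c * t) * (1 - exp (-c * t)) ^ (n - 1)) t := by
  have hlin : HasDerivAt (fun t => -c * t) (-c) t := by
    simpa using (hasDerivAt_id t).const_mul (-c)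
  exact ((hlin.exp.const_sub 1).fun_pow n).congr_deriv (by ring)

lemma tendsto_one_sub_exp_pow_atTop {c : ℝ} (hc : 0 < c) (n : ℕ) :
    Tendsto (fun t => (1 - exp (-c * t)) ^ n) atTop (𝓝 1) := by
  have hexp : Tendsto (fun t => exp (-c * t)) atTop (𝓝 0) :=
    tendsto_exp_atBot.comp (tendsto_id.const_mul_atTop_of_neg (neg_neg_of_pos hc))
  simpa using (hexp.const_sub 1).pow n

lemma integral_Ioi_natCast_mul_exp_mul_one_sub_exp_pow {c : ℝ} (hc : 0 < c) {n : ℕ}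
    (hn : n ≠ 0) : ∫ t in Ioi 0, n * c * exp (-c * t) * (1 - exp (-c * t)) ^ (n - 1) = 1 := by
  rw [integral_Ioi_of_hasDerivAt_of_nonneg' (fun t _ => hasDerivAt_one_sub_exp_pow c n t)
    (fun t ht => ?_) (tendsto_one_sub_exp_pow_atTop hc n)]
  · simp [hn]
  · have := (one_sub_exp_mem_Icc (x := -c * t) (by nlinarith [ht.out])).1
    positivity

noncomputable def minExpDensity (h : ℝ → ℝ) (z : ℝ × ℝ) : ℝ :=
  if 0 ≤ z.1 ∧ 0 ≤ z.2 then exp (-(z.1 + z.2)) * h (min z.1 z.2) else 0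

section minExpDensity

variable {h : ℝ → ℝ}

lemma minExpDensity_swap (z : ℝ × ℝ) : minExpDensity h z.swap = minExpDensity h z := by
  simp only [minExpDensity, Prod.fst_swap, Prod.snd_swap, and_comm, add_comm, min_comm]

lemma minExpDensity_nonneg (hh : ∀ t, 0 ≤ t → 0 ≤ h t) (z : ℝ × ℝ) :
    0 ≤ minExpDensity h z := by
  unfold minExpDensity
  split_ifs with hz
  · exact mul_nonneg (exp_nonneg _) (hh _ (le_min hz.1 hz.2))
  · exact le_rfl

lemma integrable_minExpDensity (hm : Measurable h) {C : ℝ} (hC : ∀ t, 0 ≤ t → ‖h t‖ ≤ C) :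
    Integrable (minExpDensity h) := by
  have hexp : Integrable ((Ici (0 : ℝ)).indicator fun x => exp (-x)) :=
    ((integrableOn_Ici_iff_integrableOn_Ioi).2 (integrableOn_exp_neg_Ioi 0)).integrable_indicator
      measurableSet_Ici
  refine ((hexp.mul_prod hexp).const_mul C).mono' ?_ (Eventually.of_forall fun z => ?_)
  · exact (Measurable.ite (measurableSet_Ici.prod measurableSet_Ici) (by fun_prop)
      measurable_const).aestronglyMeasurable
  · unfold minExpDensity
    split_ifs with hz
    · rw [norm_mul, norm_of_nonneg (exp_nonneg _), indicator_of_mem (mem_Ici.2 hz.1),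
        indicator_of_mem (mem_Ici.2 hz.2), ← exp_add, ← neg_add, mul_comm C]
      exact mul_le_mul_of_nonneg_left (hC _ (le_min hz.1 hz.2)) (exp_nonneg _)
    · have hC0 : 0 ≤ C := (norm_nonneg _).trans (hC 0 le_rfl)
      have hind : ∀ t : ℝ, 0 ≤ (Ici (0 : ℝ)).indicator (fun x => exp (-x)) t :=
        fun t => indicator_nonneg (fun _ _ => exp_nonneg _) t
      simpa only [norm_zero] using mul_nonneg hC0 (mul_nonneg (hind _) (hind _))

lemma integral_indicator_fst_le_snd_minExpDensity (x : ℝ) :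
    ∫ y, {z : ℝ × ℝ | z.1 ≤ z.2}.indicator (minExpDensity h) (x, y)
      = (Ici 0).indicator (fun t => exp (-2 * t) * h t) x := by
  by_cases hx : 0 ≤ x
  · have hfiber : (fun y => {z : ℝ × ℝ | z.1 ≤ z.2}.indicator (minExpDensity h) (x, y))
        = (Ici x).indicator fun y => exp (-x) * h x * exp (-y) := by
      ext y
      by_cases hxy : x ≤ y
      · simp only [indicator, mem_ofPred_eq, mem_Ici, hxy, hx, hx.trans hxy, and_self,
          ↓reduceIte, minExpDensity, neg_add_rev, exp_add, inf_of_le_left]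
        ring
      · simp [hxy, indicator]
    rw [hfiber, integral_indicator measurableSet_Ici, integral_Ici_eq_integral_Ioi,
      integral_const_mul, integral_exp_neg_Ioi, indicator_of_mem (mem_Ici.2 hx),
      show -2 * x = -x + -x by ring, exp_add]
    ring
  · simp [hx, indicator, minExpDensity]

lemma setIntegral_fst_le_snd_minExpDensity (hint : Integrable (minExpDensity h)) :
    ∫ z in {z : ℝ × ℝ | z.1 ≤ z.2}, minExpDensity h z = ∫ t in Ioi 0, exp (-2 * t) * h t := by
  have hs : MeasurableSet {z : ℝ × ℝ | z.1 ≤ z.2} := measurableSet_le measurable_fst measurable_snd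
  rw [← integral_indicator hs, Measure.volume_eq_prod, integral_prod _ (hint.indicator hs)]
  simp only [integral_indicator_fst_le_snd_minExpDensity]
  rw [integral_indicator measurableSet_Ici, integral_Ici_eq_integral_Ioi]

lemma setIntegral_fst_lt_snd_minExpDensity (hint : Integrable (minExpDensity h)) :
    ∫ z in {z : ℝ × ℝ | z.1 < z.2}, minExpDensity h z = ∫ t in Ioi 0, exp (-2 * t) * h t := by
  rw [← setIntegral_fst_le_snd_minExpDensity hint]
  refine setIntegral_congr_set ?_
  have hdiag : ∀ᵐ z : ℝ × ℝ, z ∉ diagonal ℝ :=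
    measure_eq_zero_iff_ae_notMem.1 (Measure.prod_diagonal_eq_zero_s10 _ _)
  filter_upwards [hdiag] with z hz
  exact propext (lt_iff_le_and_ne.trans (and_iff_left hz))

lemma setIntegral_snd_lt_fst_minExpDensity :
    ∫ z in {z : ℝ × ℝ | z.2 < z.1}, minExpDensity h z
      = ∫ z in {z : ℝ × ℝ | z.1 < z.2}, minExpDensity h z := by
  rw [Measure.volume_eq_prod, ← Measure.measurePreserving_swap.setIntegral_preimage_emb
    MeasurableEquiv.prodComm.measurableEmbedding]
  simp only [minExpDensity_swap]
  rfl

theorem integral_minExpDensity (hint : Integrable (minExpDensity h)) :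
    ∫ z, minExpDensity h z = 2 * ∫ t in Ioi 0, exp (-2 * t) * h t := by
  have hs : MeasurableSet {z : ℝ × ℝ | z.1 ≤ z.2} := measurableSet_le measurable_fst measurable_snd
  rw [← integral_add_compl hs hint]
  simp only [compl_ofPred, not_le]
  rw [setIntegral_snd_lt_fst_minExpDensity, setIntegral_fst_le_snd_minExpDensity hint,
    setIntegral_fst_lt_snd_minExpDensity hint, two_mul]

end minExpDensity

/-- The function `g(z₁, z₂) = L e^{-(z₁+z₂)} (1 - e^{-2 min{z₁,z₂}})^{L-1}` on
`[0,∞)²` (extended by `0` elsewhere) is a probability density: it is nonnegative and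
integrates to `1` over `ℝ²`. -/
theorem selected_relay_gains_density_is_pdf (L : ℕ) (hL : 0 < L) :
    (∀ z : ℝ × ℝ,
      0 ≤ (if 0 ≤ z.1 ∧ 0 ≤ z.2 then
        (L : ℝ) * Real.exp (-(z.1 + z.2)) * (1 - Real.exp (-2 * min z.1 z.2)) ^ (L - 1)
      else 0)) ∧
    (∫ z : ℝ × ℝ,
      (if 0 ≤ z.1 ∧ 0 ≤ z.2 then
        (L : ℝ) * Real.exp (-(z.1 + z.2)) * (1 - Real.exp (-2 * min z.1 z.2)) ^ (L - 1)
      else 0)) = 1 := by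
  set h : ℝ → ℝ := fun t => L * (1 - exp (-2 * t)) ^ (L - 1)
  have hdens : (fun z : ℝ × ℝ => if 0 ≤ z.1 ∧ 0 ≤ z.2 then
      (L : ℝ) * exp (-(z.1 + z.2)) * (1 - exp (-2 * min z.1 z.2)) ^ (L - 1) else 0)
      = minExpDensity h := by
    ext z
    simp only [minExpDensity, h]
    split_ifs <;> ring
  have hbound : ∀ t, 0 ≤ t → 0 ≤ h t ∧ h t ≤ L := by
    intro t ht
    obtain ⟨h0, h1⟩ := one_sub_exp_mem_Icc (x := -2 * t) (by linarith)
    exact ⟨by positivity, mul_le_of_le_one_right L.cast_nonneg (pow_le_one₀ h0 h1)⟩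
  refine ⟨fun z => congrFun hdens z ▸ minExpDensity_nonneg (fun t ht => (hbound t ht).1) z, ?_⟩
  have hint : Integrable (minExpDensity h) :=
    integrable_minExpDensity (by fun_prop) fun t ht => by
      rw [norm_of_nonneg (hbound t ht).1]; exact (hbound t ht).2
  rw [hdens, integral_minExpDensity hint, ← integral_const_mul,
    ← integral_Ioi_natCast_mul_exp_mul_one_sub_exp_pow two_pos hL.ne']
  simp only [h]
  congr 1 with t
  ring
end
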